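/- Let K ⊆ ℂ be a number field with K ⊄ ℝ, and let S be a finite set of places of K containing all archimedean places. If K is a CM-field and S contains a finite prime that splits in the extension K/K⁺, then there exists an S-unit u ∈ U_S such that u^n ∉ ℝ for every nonzero integer n. -/

import Mathlib

noncomputable section

open NumberField IsDedekindDomain
open scoped Multiplicative

variable (K : Type*) [Field K] [NumberField K]

/-- The places in `S`: all the infinite places of `K` together with the
finite places lying in a finite set `S₀`. -/
abbrev SPlace (S₀ : Finset (HeightOneSpectrum (𝓞 K))) : Type _ :=
  InfinitePlace K ⊕ {v // v ∈ S₀}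

variable (S₀ : Finset (HeightOneSpectrum (𝓞 K)))

/-- The completion of `K` at a place of `S`. -/
def SComp : SPlace K S₀ → Type _
  | .inl w => w.Completion
  | .inr v => v.1.adicCompletion K

instance : ∀ p : SPlace K S₀, CommRing (SComp K S₀ p)
  | .inl w => inferInstanceAs (CommRing w.Completion)
  | .inr v => inferInstanceAs (CommRing (v.1.adicCompletion K))

instance : ∀ p : SPlace K S₀, TopologicalSpace (SComp K S₀ p)
  | .inl w => inferInstanceAs (TopologicalSpace w.Completion)
  | .inr v => inferInstanceAs (TopologicalSpace (v.1.adicCompletion K))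

instance : ∀ p : SPlace K S₀, IsTopologicalRing (SComp K S₀ p)
  | .inl w => inferInstanceAs (IsTopologicalRing w.Completion)
  | .inr v => inferInstanceAs (IsTopologicalRing (v.1.adicCompletion K))

/-- The diagonal embedding of `K` into the product of its completions at places of `S`. -/
def SDiag : K →+* ∀ p : SPlace K S₀, SComp K S₀ p :=
  Pi.ringHom fun p => match p with
    | .inl w => algebraMap K w.Completion
    | .inr v => algebraMap K (v.1.adicCompletion K)

/-- The normalized absolute value at a place of `S`, extended to the completion.
At a real place it is the usual absolute value, at a complex place the square of
the modulus, and at a finite place `v` it is `(Nv)^(-v(x))`. -/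
def SAbs : ∀ p : SPlace K S₀, SComp K S₀ p → ℝ
  | .inl w => fun x : w.Completion => ‖x‖ ^ w.mult
  | .inr v => fun x : v.1.adicCompletion K =>
      if h : (Valued.v x : WithZero (Multiplicative ℤ)) = 0 then 0
      else (Nat.card (𝓞 K ⧸ v.1.asIdeal) : ℝ) ^ (Multiplicative.toAdd (WithZero.unzero h))

/-- The `S`-norm on the product of the completions. -/
def SNorm (ξ : ∀ p : SPlace K S₀, SComp K S₀ p) : ℝ :=
  ∏ p : SPlace K S₀, SAbs K S₀ p (ξ p)

/-- The ring of `S`-integers of `K`. -/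
def SInt : Subring K where
  carrier := {x | ∀ v : HeightOneSpectrum (𝓞 K), v ∉ S₀ → v.valuation K x ≤ 1}
  one_mem' := fun v _ => le_of_eq (map_one _)
  mul_mem' := fun ha hb v hv => by
    rw [Set.mem_setOf_eq] at *
    rw [map_mul]; exact mul_le_one' (ha v hv) (hb v hv)
  zero_mem' := fun v _ => by simp
  add_mem' := fun ha hb v hv => le_trans (Valuation.map_add _ _ _) (max_le (ha v hv) (hb v hv))
  neg_mem' := fun ha v hv => by
    rw [Set.mem_setOf_eq] at *
    rw [Valuation.map_neg]; exact ha v hv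

/-- The `S`-norm of a nonzero ideal of the `S`-integers: the cardinality of the quotient. -/
def SIdealNorm (a : Ideal (SInt K S₀)) : ℝ := (Nat.card (SInt K S₀ ⧸ a) : ℝ)

/-- `m_a^S (ξ) = N_S(a)⁻¹ ⬝ inf_{γ ∈ a} N_S (ξ - γ)`. -/
def mS (a : Ideal (SInt K S₀)) (ξ : ∀ p : SPlace K S₀, SComp K S₀ p) : ℝ :=
  (SIdealNorm K S₀ a)⁻¹ * ⨅ γ : a, SNorm K S₀ (ξ - SDiag K S₀ ((γ : SInt K S₀) : K))

/-- The `S`-Euclidean minimum of the ideal `a`. -/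
def MS (a : Ideal (SInt K S₀)) : ℝ := ⨆ ξ : K, mS K S₀ a (SDiag K S₀ ξ)

/-- The `S`-inhomogeneous minimum of the ideal `a`. -/
def MbarS (a : Ideal (SInt K S₀)) : ℝ := ⨆ ξ : ∀ p : SPlace K S₀, SComp K S₀ p, mS K S₀ a ξ

/-- The ideal `a`, embedded diagonally as an additive subgroup of `K̄_S`. -/
def aSub (a : Ideal (SInt K S₀)) : AddSubgroup (∀ p : SPlace K S₀, SComp K S₀ p) :=
  AddSubgroup.map ((SDiag K S₀).comp (SInt K S₀).subtype).toAddMonoidHom a.toAddSubgroup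

/-- The compact group `𝕋 = K̄_S / a`. -/
abbrev TS (a : Ideal (SInt K S₀)) : Type _ :=
  (∀ p : SPlace K S₀, SComp K S₀ p) ⧸ aSub K S₀ a

/-- The inclusion of the completion at a place `w ∈ S` into `K̄_S`, sending `x` to the
vector which is `x` in the `w`-component and `0` elsewhere. -/
def singleAt (w : SPlace K S₀) (x : SComp K S₀ w) : ∀ p : SPlace K S₀, SComp K S₀ p :=
  letI := Classical.decEq (SPlace K S₀)
  Pi.single w x

/-- The orbit of the class of `ξ` in `𝕋` under the multiplication action of the `S`-units. -/
def SOrb (a : Ideal (SInt K S₀)) (ξ : ∀ p : SPlace K S₀, SComp K S₀ p) : Set (TS K S₀ a) :=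
  {y | ∃ u : (SInt K S₀)ˣ, y = (QuotientAddGroup.mk (SDiag K S₀ ((u : SInt K S₀) : K) * ξ) : TS K S₀ a)}

/-- `K` is a CM-field: `K` is totally complex and is a quadratic extension of a
totally real subfield. -/
def IsCMField : Prop :=
  (∀ w : InfinitePlace K, w.IsComplex) ∧
    ∃ F : IntermediateField ℚ K,
      (∀ φ : F →+* ℂ, ∀ x : F, ∃ r : ℝ, φ x = (r : ℂ)) ∧ Module.finrank F K = 2

/-- The maximal totally real subfield `K⁺` of `K`. -/
def maxTotallyReal : IntermediateField ℚ K :=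
  sSup {F : IntermediateField ℚ K | ∀ φ : F →+* ℂ, ∀ x : F, ∃ r : ℝ, φ x = (r : ℂ)}

/-- A finite prime `v` of `K` splits in `K/K⁺` if some other prime of `K` has the same
valuation ring on `K⁺`, i.e. lies over the same prime of `K⁺`. -/
def SplitsInQuadratic (v : HeightOneSpectrum (𝓞 K)) : Prop :=
  ∃ w : HeightOneSpectrum (𝓞 K), w ≠ v ∧
    ∀ x : maxTotallyReal K, (v.valuation K (x : K) ≤ 1 ↔ w.valuation K (x : K) ≤ 1)

/-- Multiplication by the `S`-unit `u` as a map `𝕋 → 𝕋`. -/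
def TSmul (a : Ideal (SInt K S₀)) (u : (SInt K S₀)ˣ) : TS K S₀ a → TS K S₀ a :=
  QuotientAddGroup.map (aSub K S₀ a) (aSub K S₀ a)
    (AddMonoidHom.mulLeft (SDiag K S₀ ((u : SInt K S₀) : K)))
    (by
      rintro x ⟨γ, hγ, rfl⟩
      exact ⟨(u : SInt K S₀) * γ, Ideal.mul_mem_left a _ (by simpa using hγ),
        by simp [map_mul]⟩)

/-- The set of points of `𝕋` where `m_a^S` attains the inhomogeneous minimum. -/
def minSet (a : Ideal (SInt K S₀)) : Set (TS K S₀ a) :=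
  {t : TS K S₀ a | ∃ ξ, (QuotientAddGroup.mk ξ : TS K S₀ a) = t ∧ mS K S₀ a ξ = MbarS K S₀ a}

instance TSMeasurableSpace (a : Ideal (SInt K S₀)) : MeasurableSpace (TS K S₀ a) :=
  borel _

/-! Let `𝔭 ∈ S` split in `K/K⁺`, and let `𝔮 ≠ 𝔭` be another prime of `K` over the same prime
of `K⁺`. Since the class group is finite, some power of `𝔭` is principal; its generator `u` is
an `S`-unit with `|u|_𝔭 < 1` and `|u|_𝔮 = 1`. If `f (u ^ n)` were real, then `u ^ n` would lie
in the proper subfield `f⁻¹(ℝ)`, which contains a totally real subfield of index `2` and hence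
equals it, so `u ^ n ∈ K⁺`. As `𝔭` and `𝔮` induce the same valuation ring on `K⁺`, this gives
`|u|_𝔭 ^ n = |u|_𝔮 ^ n = 1`, forcing `n = 0`. -/

namespace IntermediateField

variable {k L : Type*} [Field k] [Field L] [Algebra k L]

theorem eq_of_le_of_ne_top_of_finrank_prime {F M : IntermediateField k L} (hFM : F ≤ M)
    (hM : M ≠ ⊤) (hp : (Module.finrank F L).Prime) : M = F := by
  have := isSimpleOrder_of_finrank_prime F L hp
  rcases eq_bot_or_eq_top (extendScalars hFM) with h | h
  · simpa using congrArg (restrictScalars k) h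
  · exact absurd (by simpa using congrArg (restrictScalars k) h) hM

end IntermediateField

theorem Valuation.eq_one_of_le_one_iff_of_mem {K Γ₀ Γ₀' : Type*} [Field K]
    [LinearOrderedCommGroupWithZero Γ₀] [LinearOrderedCommGroupWithZero Γ₀']
    {v : Valuation K Γ₀} {w : Valuation K Γ₀'} {E : Subfield K}
    (hvw : ∀ x : E, v x ≤ 1 ↔ w x ≤ 1) {x : K} (hx : x ∈ E) (hwx : w x = 1) : v x = 1 := by
  have hx0 : x ≠ 0 := by rintro rfl; simp at hwx
  have hle : v x ≤ 1 := (hvw ⟨x, hx⟩).2 hwx.le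
  have hinv : v x⁻¹ ≤ 1 := (hvw ⟨x⁻¹, E.inv_mem hx⟩).2 (by rw [map_inv₀, hwx, inv_one])
  rw [map_inv₀, inv_le_one_iff₀] at hinv
  exact le_antisymm hle (hinv.resolve_left (by simpa using hx0))

namespace IsDedekindDomain.HeightOneSpectrum

variable {R : Type*} [CommRing R] [IsDedekindDomain R] [Fintype (ClassGroup R)]

theorem exists_span_singleton_eq_pow_card_classGroup (v : HeightOneSpectrum R) :
    ∃ g : R, Ideal.span {g} = v.asIdeal ^ Fintype.card (ClassGroup R) := by
  have hv : v.asIdeal ∈ nonZeroDivisors (Ideal R) := mem_nonZeroDivisors_of_ne_zero v.ne_bot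
  have h : ClassGroup.mk0 (⟨v.asIdeal, hv⟩ ^ Fintype.card (ClassGroup R)) = 1 := by
    rw [map_pow, pow_card_eq_one]
  obtain ⟨g, hg⟩ := ((ClassGroup.mk0_eq_one_iff _).mp h).principal
  exact ⟨g, by simpa using hg.symm⟩

theorem exists_intValuation_lt_one_and_eq_one (v : HeightOneSpectrum R) :
    ∃ g : R, g ≠ 0 ∧ v.intValuation g < 1 ∧
      ∀ w : HeightOneSpectrum R, w ≠ v → w.intValuation g = 1 := by
  obtain ⟨g, hg⟩ := v.exists_span_singleton_eq_pow_card_classGroup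
  refine ⟨g, ?_, ?_, fun w hwv => intValuation_eq_one_iff.2 fun hgw => hwv ?_⟩
  · rw [Ne, ← Ideal.span_singleton_eq_bot, hg]
    exact pow_ne_zero _ v.ne_bot
  · rw [intValuation_lt_one_iff_mem, ← Ideal.span_singleton_le_iff_mem, hg]
    exact Ideal.pow_le_self Fintype.card_ne_zero
  · rw [← Ideal.span_singleton_le_iff_mem, hg] at hgw
    exact HeightOneSpectrum.ext (v.isMaximal.eq_of_le w.isPrime.ne_top
      (Ideal.IsPrime.le_of_pow_le hgw)).symm

end IsDedekindDomain.HeightOneSpectrum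

theorem exists_sUnit_valuation_lt_one_and_eq_one {v : HeightOneSpectrum (𝓞 K)} (hv : v ∈ S₀) :
    ∃ u : (SInt K S₀)ˣ, v.valuation K (u : SInt K S₀) < 1 ∧
      ∀ w : HeightOneSpectrum (𝓞 K), w ≠ v → w.valuation K (u : SInt K S₀) = 1 := by
  obtain ⟨g, hg0, hvg, hwg⟩ := v.exists_intValuation_lt_one_and_eq_one
  set x : K := algebraMap (𝓞 K) K g
  have hx0 : x ≠ 0 := (map_ne_zero_iff _ (IsFractionRing.injective (𝓞 K) K)).2 hg0
  have hx : ∀ w : HeightOneSpectrum (𝓞 K), w.valuation K x = w.intValuation g :=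
    fun w => w.valuation_of_algebraMap g
  have hxS : x ∈ SInt K S₀ := fun w _ => (hx w).symm ▸ w.intValuation_le_one g
  have hxS' : x⁻¹ ∈ SInt K S₀ := fun w hw => by
    rw [map_inv₀, hx, hwg w (ne_of_mem_of_not_mem hv hw).symm, inv_one]
  refine ⟨⟨⟨x, hxS⟩, ⟨x⁻¹, hxS'⟩, Subtype.ext (mul_inv_cancel₀ hx0),
    Subtype.ext (inv_mul_cancel₀ hx0)⟩, (hx v).symm ▸ hvg, fun w hw => (hx w).trans (hwg w hw)⟩

variable {K} in
theorem mem_maxTotallyReal_of_map_mem_range_ofReal (f : K →+* ℂ)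
    (hKR : ∃ x : K, f x ∉ Set.range ((↑) : ℝ → ℂ)) {F : IntermediateField ℚ K}
    (hF : ∀ φ : F →+* ℂ, ∀ x : F, ∃ r : ℝ, φ x = (r : ℂ)) (hF2 : Module.finrank F K = 2)
    {x : K} (hx : f x ∈ Set.range ((↑) : ℝ → ℂ)) : x ∈ maxTotallyReal K := by
  let M : IntermediateField ℚ K :=
    Complex.ofRealHom.toRatAlgHom.fieldRange.comap f.toRatAlgHom
  have hFM : F ≤ M := fun y hy => by
    obtain ⟨r, hr⟩ := hF (f.comp F.val.toRingHom) ⟨y, hy⟩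
    exact ⟨r, hr.symm⟩
  have hM : M ≠ ⊤ := fun h => by
    obtain ⟨y, hy⟩ := hKR
    exact hy (h ▸ IntermediateField.mem_top : y ∈ M)
  have hMF : M = F := IntermediateField.eq_of_le_of_ne_top_of_finrank_prime hFM hM
    (hF2 ▸ Nat.prime_two)
  exact (le_sSup hF : F ≤ maxTotallyReal K) (hMF ▸ show x ∈ M from hx)

/-- Let `K ⊆ ℂ` be a number field with `K ⊄ ℝ`.  If `K` is a CM-field and
`S` contains a finite prime splitting in `K/K⁺`, then there is an `S`-unit `u` with
`u^n ∉ ℝ` for every nonzero integer `n`. -/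
theorem exists_sUnit_powers_not_real
    (f : K →+* ℂ) (hKR : ∃ x : K, f x ∉ Set.range ((↑) : ℝ → ℂ))
    (hCM : _root_.IsCMField K) (hsplit : ∃ v ∈ S₀, SplitsInQuadratic K v) :
    ∃ u : (SInt K S₀)ˣ, ∀ n : ℤ, n ≠ 0 →
      (f ((u : SInt K S₀) : K)) ^ n ∉ Set.range ((↑) : ℝ → ℂ) := by
  obtain ⟨-, F, hF, hF2⟩ := hCM
  obtain ⟨v, hvS, w, hwv, hvw⟩ := hsplit
  obtain ⟨u, hvu, hwu⟩ := exists_sUnit_valuation_lt_one_and_eq_one K S₀ hvS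
  refine ⟨u, fun n hn hreal => ?_⟩
  have hmem : ((u : SInt K S₀) : K) ^ n ∈ maxTotallyReal K :=
    mem_maxTotallyReal_of_map_mem_range_ofReal f hKR hF hF2 (by rwa [map_zpow₀])
  have hvun : v.valuation K (((u : SInt K S₀) : K) ^ n) = 1 :=
    Valuation.eq_one_of_le_one_iff_of_mem (E := (maxTotallyReal K).toSubfield) hvw hmem
      (by rw [map_zpow₀, hwu w hwv, one_zpow])
  rw [map_zpow₀, zpow_eq_one_iff_right₀ zero_le hvu.ne] at hvun
  exact hn hvun
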